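/- arXiv:2211.02779 — 2 statements merged into one kernel-verified Lean document; each statement's English description precedes it below -/
import Mathlib

section
/- For every $p$ with $2 < p < \infty$ and every $q$ with $p < q \le \infty$, the Lorentz space $L^{p,q}(\mathbb{R}^3)$ embeds continuously into the homogeneous Morrey space $\dot{M}^{2,p}(\mathbb{R}^3)$: there exists $c>0$ such that $\|f\|_{\dot{M}^{2,p}} \le c\, \|f\|_{L^{p,q}}$ for all $f \in L^{p,q}(\mathbb{R}^3)$. -/
open MeasureTheory ENNReal

noncomputable section

abbrev E3 := EuclideanSpace ℝ (Fin 3)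

noncomputable def morreyNorm {F : Type*} [NormedAddCommGroup F] (r p : ℝ) (f : E3 → F) : ℝ≥0∞ :=
  ⨆ (x₀ : E3) (R : ℝ) (_ : 0 < R),
    ENNReal.ofReal (R ^ (3 / p)) *
      ((∫⁻ x in Metric.ball x₀ R, (‖f x‖₊ : ℝ≥0∞) ^ r) / volume (Metric.ball x₀ R)) ^ (1 / r)

/-- The Lorentz quasinorm `‖f‖_{L^{p,q}}` on `ℝ³`, defined through the distribution
function `λ_f(s) = |{ |f| > s }|`:  for `q < ∞`,
`‖f‖_{p,q}^q = p ∫₀^∞ s^{q-1} λ_f(s)^{q/p} ds`, and for `q = ∞`,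
`‖f‖_{p,∞} = sup_{s>0} s λ_f(s)^{1/p}`. -/
noncomputable def lorentzNorm {F : Type*} [NormedAddCommGroup F] (p : ℝ) (q : ℝ≥0∞)
    (f : E3 → F) : ℝ≥0∞ :=
  if q = ∞ then
    ⨆ (s : ℝ) (_ : 0 < s),
      ENNReal.ofReal s * (volume {x | s < ‖f x‖}) ^ (1 / p)
  else
    (ENNReal.ofReal p *
      ∫⁻ s in Set.Ioi (0 : ℝ),
        ENNReal.ofReal (s ^ (q.toReal - 1)) * (volume {x | s < ‖f x‖}) ^ (q.toReal / p)) ^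
      (1 / q.toReal)

open Set in
/-- The weak-`L^p` quasinorm is controlled by the Lorentz `L^{p,q}` quasinorm for `p < q`. -/
lemma weak_le_lorentz (p : ℝ) (hp2 : 2 < p) (q : ℝ≥0∞) (hpq : ENNReal.ofReal p < q)
    (f : E3 → ℝ) :
    (⨆ (s : ℝ) (_ : 0 < s), ENNReal.ofReal s * (volume {x | s < ‖f x‖}) ^ (1 / p))
      ≤ 2 * lorentzNorm p q f := by
  have hp0 : (0:ℝ) < p := by linarith
  rcases eq_or_ne q ∞ with hq | hq
  · rw [lorentzNorm, if_pos hq]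
    exact le_mul_of_one_le_left zero_le one_le_two
  · rw [lorentzNorm, if_neg hq]
    have hpq' : p < q.toReal := (ENNReal.ofReal_lt_iff_lt_toReal hp0.le hq).mp hpq
    set q' := q.toReal with hq'def
    have hq'1 : 1 < q' := by linarith
    have hq'0 : (0:ℝ) < q' := by linarith
    apply iSup_le; intro s; apply iSup_le; intro hs
    set μs := volume {x | s < ‖f x‖} with hμs
    have hs2 : (0:ℝ) < s / 2 := by linarith
    set X := ENNReal.ofReal p *
      ∫⁻ t in Set.Ioi (0 : ℝ),
        ENNReal.ofReal (t ^ (q' - 1)) * (volume {x | t < ‖f x‖}) ^ (q' / p) with hX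
    have hle1 : ENNReal.ofReal ((s/2) ^ (q'-1)) * μs ^ (q'/p) * ENNReal.ofReal (s/2)
        ≤ ∫⁻ t in Set.Ioi (0:ℝ),
            ENNReal.ofReal (t ^ (q'-1)) * (volume {x | t < ‖f x‖}) ^ (q'/p) := by
      have hsub : Ioc (s/2) s ⊆ Ioi (0:ℝ) := fun t ht => lt_trans hs2 ht.1
      refine le_trans ?_ (lintegral_mono_set hsub)
      have hptw : ∀ t ∈ Ioc (s/2) s,
          ENNReal.ofReal ((s/2)^(q'-1)) * μs^(q'/p)
            ≤ ENNReal.ofReal (t^(q'-1)) * (volume {x | t < ‖f x‖})^(q'/p) := by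
        intro t ht
        refine mul_le_mul' (ENNReal.ofReal_le_ofReal
          (Real.rpow_le_rpow hs2.le ht.1.le (by linarith))) ?_
        exact ENNReal.rpow_le_rpow
          (measure_mono (fun x hx => lt_of_le_of_lt ht.2 hx))
          (div_nonneg hq'0.le hp0.le)
      calc ENNReal.ofReal ((s/2)^(q'-1)) * μs^(q'/p) * ENNReal.ofReal (s/2)
          = (ENNReal.ofReal ((s/2)^(q'-1)) * μs^(q'/p)) * volume (Ioc (s/2) s) := by
            rw [Real.volume_Ioc, show s - s/2 = s/2 by ring]
        _ = ∫⁻ _ in Ioc (s/2) s, ENNReal.ofReal ((s/2)^(q'-1)) * μs^(q'/p) :=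
            (setLIntegral_const _ _).symm
        _ ≤ ∫⁻ t in Ioc (s/2) s,
              ENNReal.ofReal (t^(q'-1)) * (volume {x | t < ‖f x‖})^(q'/p) :=
            setLIntegral_mono' measurableSet_Ioc hptw
    have hXle : ENNReal.ofReal ((s/2)^q') * μs^(q'/p) ≤ X := by
      calc ENNReal.ofReal ((s/2)^q') * μs^(q'/p)
          = ENNReal.ofReal ((s/2)^(q'-1)) * μs^(q'/p) * ENNReal.ofReal (s/2) := by
            rw [mul_assoc, mul_comm (μs ^ (q'/p)), ← mul_assoc,
              ← ENNReal.ofReal_mul (Real.rpow_nonneg hs2.le _)]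
            congr 2
            nth_rewrite 3 [← Real.rpow_one (s/2)]
            rw [← Real.rpow_add hs2]
            norm_num
        _ ≤ ∫⁻ t in Set.Ioi (0:ℝ),
              ENNReal.ofReal (t ^ (q'-1)) * (volume {x | t < ‖f x‖}) ^ (q'/p) := hle1
        _ ≤ X := le_mul_of_one_le_left zero_le
            (ENNReal.one_le_ofReal.mpr (by linarith))
    have hle2 : ENNReal.ofReal (s/2) * μs ^ (1/p) ≤ X ^ (1/q') := by
      have h := ENNReal.rpow_le_rpow hXle (by positivity : (0:ℝ) ≤ 1/q')
      rw [ENNReal.mul_rpow_of_nonneg _ _ (by positivity : (0:ℝ) ≤ 1/q'),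
        ENNReal.ofReal_rpow_of_pos (Real.rpow_pos_of_pos hs2 _),
        ← Real.rpow_mul hs2.le, mul_one_div_cancel hq'0.ne', Real.rpow_one,
        ← ENNReal.rpow_mul, show q'/p * (1/q') = 1/p by field_simp] at h
      exact h
    calc ENNReal.ofReal s * μs ^ (1/p)
        = 2 * (ENNReal.ofReal (s/2) * μs ^ (1/p)) := by
          rw [← mul_assoc]
          congr 1
          rw [show (2:ℝ≥0∞) = ENNReal.ofReal 2 by simp, ← ENNReal.ofReal_mul (by norm_num)]
          congr 1; ring
      _ ≤ 2 * X ^ (1/q') := mul_le_mul_right hle2 2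

open Set in
/-- The Morrey `Ṁ^{2,p}` norm is controlled by the weak-`L^p` quasinorm. -/
lemma morrey_le_weak (p : ℝ) (hp2 : 2 < p) (f : E3 → ℝ)
    (hf : AEStronglyMeasurable f volume)
    (hWt : (⨆ (s : ℝ) (_ : 0 < s),
      ENNReal.ofReal s * (volume {x | s < ‖f x‖}) ^ (1 / p)) ≠ ∞) :
    morreyNorm 2 p f ≤
      ENNReal.ofReal (2 * (1 + (p-2)⁻¹)) ^ ((1:ℝ)/2) *
        (volume (Metric.ball (0:E3) 1)) ^ (-(1/p)) *
        (⨆ (s : ℝ) (_ : 0 < s), ENNReal.ofReal s * (volume {x | s < ‖f x‖}) ^ (1 / p)) := by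
  set W := ⨆ (s : ℝ) (_ : 0 < s), ENNReal.ofReal s * (volume {x | s < ‖f x‖}) ^ (1 / p)
    with hWdef
  have hp0 : (0:ℝ) < p := by linarith
  set K : ℝ := 2 * (1 + (p-2)⁻¹) with hK
  set ω := volume (Metric.ball (0:E3) 1) with hωdef
  have hω0 : ω ≠ 0 := (Metric.measure_ball_pos _ _ one_pos).ne'
  have hωt : ω ≠ ∞ := measure_ball_lt_top.ne
  rw [morreyNorm]
  apply iSup_le; intro x₀; apply iSup_le; intro R; apply iSup_le; intro hR
  set Bl := Metric.ball x₀ R with hBl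
  set V := volume Bl with hVdef
  have hV0 : V ≠ 0 := (Metric.measure_ball_pos _ _ hR).ne'
  have hVt : V ≠ ∞ := measure_ball_lt_top.ne
  set L := ∫⁻ x in Bl, (‖f x‖₊ : ℝ≥0∞) ^ (2:ℝ) with hLdef
  -- layer cake
  have hnn : 0 ≤ᵐ[volume.restrict Bl] fun x => ‖f x‖ :=
    Filter.Eventually.of_forall fun _ => norm_nonneg _
  have hmble : AEMeasurable (fun x => ‖f x‖) (volume.restrict Bl) :=
    (hf.norm.aemeasurable).restrict
  have hL : L = ENNReal.ofReal 2 * ∫⁻ t in Ioi (0:ℝ),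
      (volume.restrict Bl) {a | t < ‖f a‖} * ENNReal.ofReal (t ^ ((2:ℝ) - 1)) := by
    rw [← MeasureTheory.lintegral_rpow_eq_lintegral_meas_lt_mul (volume.restrict Bl) hnn hmble
      (by norm_num : (0:ℝ) < 2), hLdef]
    apply lintegral_congr; intro x
    rw [← ENNReal.ofReal_coe_nnreal, coe_nnnorm, ENNReal.ofReal_rpow_of_nonneg (norm_nonneg _) (by norm_num)]
  -- pointwise bounds on the distribution function
  have hμV : ∀ t : ℝ, (volume.restrict Bl) {a | t < ‖f a‖} ≤ V := by
    intro t
    rw [Measure.restrict_apply' measurableSet_ball]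
    exact measure_mono inter_subset_right
  have hμW : ∀ t : ℝ, 0 < t →
      (volume.restrict Bl) {a | t < ‖f a‖} ≤ W ^ p * ENNReal.ofReal (t ^ (-p)) := by
    intro t ht
    have h1 : ENNReal.ofReal t * (volume {x | t < ‖f x‖}) ^ (1/p) ≤ W :=
      le_iSup₂ (f := fun s (_ : (0:ℝ) < s) =>
        ENNReal.ofReal s * (volume {x | s < ‖f x‖}) ^ (1 / p)) t ht
    have ht0 : ENNReal.ofReal t ≠ 0 := (ENNReal.ofReal_pos.mpr ht).ne'
    have h2 : (volume {x | t < ‖f x‖}) ^ (1/p) ≤ W / ENNReal.ofReal t := by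
      rw [ENNReal.le_div_iff_mul_le (Or.inl ht0) (Or.inl ENNReal.ofReal_ne_top), mul_comm]
      exact h1
    have h3 := ENNReal.rpow_le_rpow h2 hp0.le
    rw [← ENNReal.rpow_mul, one_div, inv_mul_cancel₀ hp0.ne', ENNReal.rpow_one] at h3
    calc (volume.restrict Bl) {a | t < ‖f a‖} ≤ volume {x | t < ‖f x‖} :=
        Measure.restrict_apply_le _ _
      _ ≤ (W / ENNReal.ofReal t) ^ p := h3
      _ = W ^ p * (ENNReal.ofReal t) ^ (-p) := by
          rw [ENNReal.div_rpow_of_nonneg _ _ hp0.le, div_eq_mul_inv, ENNReal.rpow_neg]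
      _ = W ^ p * ENNReal.ofReal (t ^ (-p)) := by rw [ENNReal.ofReal_rpow_of_pos ht]
  rcases eq_or_ne W 0 with hW0 | hWne
  · -- trivial case: f = 0 a.e.
    have hzero : ∀ᵐ t ∂(volume.restrict (Ioi (0:ℝ))),
        (volume.restrict Bl) {a | t < ‖f a‖} * ENNReal.ofReal (t ^ ((2:ℝ) - 1)) = 0 := by
      filter_upwards [self_mem_ae_restrict measurableSet_Ioi] with t ht
      have h := hμW t ht
      rw [hW0, ENNReal.zero_rpow_of_pos hp0, zero_mul, le_zero_iff] at h
      rw [h, zero_mul]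
    have : L = 0 := by
      rw [hL, lintegral_congr_ae hzero, lintegral_zero, mul_zero]
    rw [this, ENNReal.zero_div, ENNReal.zero_rpow_of_pos (by norm_num), mul_zero]
    exact zero_le
  · -- main case
    have hVp0 : V ^ (-(1/p)) ≠ 0 := by
      simp [ENNReal.rpow_eq_zero_iff, hV0, hVt]
    have hVpt : V ^ (-(1/p)) ≠ ∞ := by
      simp [ENNReal.rpow_eq_top_iff, hV0, hVt]
    set S := W * V ^ (-(1/p)) with hSdef
    have hSne : S ≠ 0 := mul_ne_zero hWne hVp0
    have hSt : S ≠ ∞ := ENNReal.mul_ne_top hWt hVpt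
    set s₀ := S.toReal with hs₀def
    have hs₀pos : 0 < s₀ := ENNReal.toReal_pos hSne hSt
    have hSofReal : ENNReal.ofReal s₀ = S := ENNReal.ofReal_toReal hSt
    set F : ℝ → ℝ≥0∞ := fun t =>
      (volume.restrict Bl) {a | t < ‖f a‖} * ENNReal.ofReal (t ^ ((2:ℝ) - 1)) with hF
    have hsplit : (∫⁻ t in Ioi (0:ℝ), F t) = (∫⁻ t in Ioc 0 s₀, F t) + ∫⁻ t in Ioi s₀, F t := by
      rw [← Ioc_union_Ioi_eq_Ioi hs₀pos.le,
        lintegral_union measurableSet_Ioi (Ioc_disjoint_Ioi le_rfl)]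
    have h1 : (∫⁻ t in Ioc 0 s₀, F t) ≤ V * ENNReal.ofReal s₀ * ENNReal.ofReal s₀ := by
      have hptw : ∀ t ∈ Ioc (0:ℝ) s₀, F t ≤ V * ENNReal.ofReal s₀ := by
        intro t ht
        refine mul_le_mul' (hμV t) (ENNReal.ofReal_le_ofReal ?_)
        rw [show (2:ℝ)-1 = 1 by norm_num, Real.rpow_one]
        exact ht.2
      calc (∫⁻ t in Ioc 0 s₀, F t) ≤ ∫⁻ _ in Ioc (0:ℝ) s₀, V * ENNReal.ofReal s₀ :=
          setLIntegral_mono' measurableSet_Ioc hptw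
        _ = V * ENNReal.ofReal s₀ * volume (Ioc (0:ℝ) s₀) := setLIntegral_const _ _
        _ = V * ENNReal.ofReal s₀ * ENNReal.ofReal s₀ := by
          rw [Real.volume_Ioc, sub_zero]
    have hJ : (∫⁻ t in Ioi s₀, ENNReal.ofReal (t ^ (1 - p)))
        = ENNReal.ofReal (s₀ ^ (2 - p) / (p - 2)) := by
      have hint : IntegrableOn (fun t : ℝ => t ^ (1 - p)) (Ioi s₀) :=
        integrableOn_Ioi_rpow_of_lt (by linarith) hs₀pos
      have hnn' : 0 ≤ᵐ[volume.restrict (Ioi s₀)] fun t : ℝ => t ^ (1-p) := by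
        filter_upwards [self_mem_ae_restrict measurableSet_Ioi] with t ht
        exact Real.rpow_nonneg (le_of_lt (lt_trans hs₀pos ht)) _
      rw [← MeasureTheory.ofReal_integral_eq_lintegral_ofReal hint hnn',
        integral_Ioi_rpow_of_lt (by linarith) hs₀pos]
      congr 1
      rw [show (1-p) + 1 = 2 - p by ring]
      rw [div_eq_div_iff (by linarith) (by linarith)]
      ring
    have h2 : (∫⁻ t in Ioi s₀, F t) ≤ W ^ p * ENNReal.ofReal (s₀ ^ (2-p) / (p-2)) := by
      have hptw : ∀ t ∈ Ioi s₀, F t ≤ W ^ p * ENNReal.ofReal (t ^ (1 - p)) := by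
        intro t ht
        have htp : 0 < t := lt_trans hs₀pos ht
        calc F t ≤ (W ^ p * ENNReal.ofReal (t ^ (-p))) * ENNReal.ofReal (t ^ ((2:ℝ)-1)) :=
            mul_le_mul_left (hμW t htp) _
          _ = W ^ p * ENNReal.ofReal (t ^ (1 - p)) := by
            rw [mul_assoc, ← ENNReal.ofReal_mul (Real.rpow_nonneg htp.le _),
              ← Real.rpow_add htp, show -p + ((2:ℝ)-1) = 1 - p by ring]
      calc (∫⁻ t in Ioi s₀, F t) ≤ ∫⁻ t in Ioi s₀, W ^ p * ENNReal.ofReal (t ^ (1 - p)) :=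
          setLIntegral_mono' measurableSet_Ioi hptw
        _ = W ^ p * ∫⁻ t in Ioi s₀, ENNReal.ofReal (t ^ (1 - p)) :=
          lintegral_const_mul' _ _ (ENNReal.rpow_ne_top_of_nonneg hp0.le hWt)
        _ = W ^ p * ENNReal.ofReal (s₀ ^ (2-p) / (p-2)) := by rw [hJ]
    -- algebra
    have hterm1 : V * ENNReal.ofReal s₀ * ENNReal.ofReal s₀
        = W ^ (2:ℝ) * V ^ ((p-2)/p) := by
      rw [hSofReal, hSdef, show W ^ (2:ℝ) = W * W by
        rw [show (2:ℝ) = ((2:ℕ):ℝ) by norm_num, ENNReal.rpow_natCast, sq],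
        show (p-2)/p = 1 + -(1/p) + -(1/p) by field_simp; ring,
        ENNReal.rpow_add _ _ hV0 hVt, ENNReal.rpow_add _ _ hV0 hVt, ENNReal.rpow_one]
      ring
    have hterm2 : W ^ p * ENNReal.ofReal (s₀ ^ (2-p) / (p-2))
        = W ^ (2:ℝ) * V ^ ((p-2)/p) * ENNReal.ofReal ((p-2)⁻¹) := by
      rw [div_eq_mul_inv, ENNReal.ofReal_mul (Real.rpow_nonneg hs₀pos.le _),
        ← ENNReal.ofReal_rpow_of_pos hs₀pos, hSofReal, hSdef,
        ENNReal.mul_rpow_of_ne_top hWt hVpt, ← ENNReal.rpow_mul,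
        show -(1/p) * (2-p) = (p-2)/p by field_simp; ring, ← mul_assoc, ← mul_assoc,
        mul_comm (W ^ p) (W ^ ((2:ℝ)-p)), ← ENNReal.rpow_add _ _ hWne hWt,
        show (2:ℝ) - p + p = 2 by ring]
    have hLle : L ≤ ENNReal.ofReal K * (W ^ (2:ℝ) * V ^ ((p-2)/p)) := by
      calc L = ENNReal.ofReal 2 * ∫⁻ t in Ioi (0:ℝ), F t := hL
        _ = ENNReal.ofReal 2 * ((∫⁻ t in Ioc 0 s₀, F t) + ∫⁻ t in Ioi s₀, F t) := by
          rw [hsplit]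
        _ ≤ ENNReal.ofReal 2 * (V * ENNReal.ofReal s₀ * ENNReal.ofReal s₀
              + W ^ p * ENNReal.ofReal (s₀ ^ (2-p) / (p-2))) :=
          mul_le_mul_right (add_le_add h1 h2) _
        _ = ENNReal.ofReal 2 * (W ^ (2:ℝ) * V ^ ((p-2)/p) * (1 + ENNReal.ofReal ((p-2)⁻¹))) := by
          rw [hterm1, hterm2]; ring
        _ = ENNReal.ofReal K * (W ^ (2:ℝ) * V ^ ((p-2)/p)) := by
          rw [hK, ENNReal.ofReal_mul (by norm_num),
            ENNReal.ofReal_add (by norm_num) (inv_nonneg.mpr (by linarith)), ENNReal.ofReal_one]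
          ring
    have hdiv : L / V ≤ ENNReal.ofReal K * W ^ (2:ℝ) * V ^ (-(2/p)) := by
      apply ENNReal.div_le_of_le_mul
      calc L ≤ ENNReal.ofReal K * (W ^ (2:ℝ) * V ^ ((p-2)/p)) := hLle
        _ = ENNReal.ofReal K * W ^ (2:ℝ) * V ^ (-(2/p)) * V := by
          rw [show (p-2)/p = -(2/p) + 1 by field_simp; ring,
            ENNReal.rpow_add _ _ hV0 hVt, ENNReal.rpow_one]
          ring
    have hroot : (L / V) ^ ((1:ℝ)/2) ≤
        ENNReal.ofReal K ^ ((1:ℝ)/2) * W * V ^ (-(1/p)) := by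
      calc (L/V) ^ ((1:ℝ)/2) ≤ (ENNReal.ofReal K * W ^ (2:ℝ) * V ^ (-(2/p))) ^ ((1:ℝ)/2) :=
          ENNReal.rpow_le_rpow hdiv (by norm_num)
        _ = ENNReal.ofReal K ^ ((1:ℝ)/2) * W * V ^ (-(1/p)) := by
          rw [ENNReal.mul_rpow_of_nonneg _ _ (by norm_num : (0:ℝ) ≤ 1/2),
            ENNReal.mul_rpow_of_nonneg _ _ (by norm_num : (0:ℝ) ≤ 1/2),
            ← ENNReal.rpow_mul, ← ENNReal.rpow_mul,
            show (2:ℝ) * (1/2) = 1 by norm_num, show -(2/p) * (1/2) = -(1/p) by ring,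
            ENNReal.rpow_one]
    have hball : V = ENNReal.ofReal (R ^ (3:ℕ)) * ω := by
      rw [hVdef, hBl, hωdef, Measure.addHaar_ball _ _ hR.le, finrank_euclideanSpace_fin]
    have hmain : ENNReal.ofReal (R ^ (3/p)) * ENNReal.ofReal ((R ^ (3:ℕ)) ^ (-(1/p))) = 1 := by
      rw [← ENNReal.ofReal_mul (Real.rpow_nonneg hR.le _), ← Real.rpow_natCast R 3,
        ← Real.rpow_mul hR.le, ← Real.rpow_add hR,
        show 3/p + ((3:ℕ):ℝ) * -(1/p) = 0 by push_cast; ring, Real.rpow_zero,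
        ENNReal.ofReal_one]
    calc ENNReal.ofReal (R ^ (3/p)) * (L / V) ^ ((1:ℝ)/2)
        ≤ ENNReal.ofReal (R ^ (3/p)) * (ENNReal.ofReal K ^ ((1:ℝ)/2) * W * V ^ (-(1/p))) :=
          mul_le_mul_right hroot _
      _ = ENNReal.ofReal K ^ ((1:ℝ)/2) * ω ^ (-(1/p)) * W := by
          rw [hball, ENNReal.mul_rpow_of_ne_top ENNReal.ofReal_ne_top hωt,
            ENNReal.ofReal_rpow_of_pos (pow_pos hR 3)]
          calc ENNReal.ofReal (R ^ (3/p)) * (ENNReal.ofReal K ^ ((1:ℝ)/2) * W *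
                (ENNReal.ofReal ((R ^ (3:ℕ)) ^ (-(1/p))) * ω ^ (-(1/p))))
              = (ENNReal.ofReal (R ^ (3/p)) * ENNReal.ofReal ((R ^ (3:ℕ)) ^ (-(1/p)))) *
                (ENNReal.ofReal K ^ ((1:ℝ)/2) * ω ^ (-(1/p)) * W) := by ring
            _ = ENNReal.ofReal K ^ ((1:ℝ)/2) * ω ^ (-(1/p)) * W := by rw [hmain, one_mul]

/-- continuous embedding of the Lorentz space `L^{p,q}(ℝ³)`, `p < q ≤ ∞`,
into the homogeneous Morrey space `Ṁ^{2,p}(ℝ³)`. -/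
theorem lorentz_embeds_morrey (p : ℝ) (hp2 : 2 < p) (q : ℝ≥0∞)
    (hpq : ENNReal.ofReal p < q) :
    ∃ c : ℝ, 0 < c ∧ ∀ f : E3 → ℝ, AEStronglyMeasurable f volume →
      lorentzNorm p q f < ∞ →
      morreyNorm 2 p f ≤ ENNReal.ofReal c * lorentzNorm p q f := by
  have hp0 : (0:ℝ) < p := by linarith
  set ω := volume (Metric.ball (0:E3) 1) with hω
  have hω0 : ω ≠ 0 := (Metric.measure_ball_pos _ _ one_pos).ne'
  have hωt : ω ≠ ∞ := measure_ball_lt_top.ne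
  have hK0 : (0:ℝ) < 2 * (1 + (p-2)⁻¹) := by
    have h2 : (0:ℝ) < p - 2 := by linarith
    positivity
  set B : ℝ≥0∞ := ENNReal.ofReal (2*(1+(p-2)⁻¹)) ^ ((1:ℝ)/2) * ω ^ (-(1/p)) with hB
  have hB0 : B ≠ 0 := by
    apply mul_ne_zero
    · simp [ENNReal.rpow_eq_zero_iff, (ENNReal.ofReal_pos.mpr hK0).ne']
      linarith
    · simp [ENNReal.rpow_eq_zero_iff, hω0, hωt]
  have hBt : B ≠ ∞ := by
    apply ENNReal.mul_ne_top
    · simp [ENNReal.rpow_eq_top_iff, (ENNReal.ofReal_pos.mpr hK0).ne']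
      exact ENNReal.mul_ne_top (by norm_num) ENNReal.ofReal_ne_top
    · simp [ENNReal.rpow_eq_top_iff, hω0, hωt]
  have hA0 : B * 2 ≠ 0 := mul_ne_zero hB0 (by norm_num)
  have hAt : B * 2 ≠ ∞ := ENNReal.mul_ne_top hBt (by norm_num)
  refine ⟨(B * 2).toReal, ENNReal.toReal_pos hA0 hAt, ?_⟩
  intro f hf hlor
  have hWlor := weak_le_lorentz p hp2 q hpq f
  have hWt : (⨆ (s : ℝ) (_ : 0 < s),
      ENNReal.ofReal s * (volume {x | s < ‖f x‖}) ^ (1 / p)) ≠ ∞ :=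
    (lt_of_le_of_lt hWlor (ENNReal.mul_lt_top ENNReal.ofNat_lt_top hlor)).ne
  calc morreyNorm 2 p f
      ≤ B * (⨆ (s : ℝ) (_ : 0 < s), ENNReal.ofReal s * (volume {x | s < ‖f x‖}) ^ (1 / p)) :=
        morrey_le_weak p hp2 f hf hWt
    _ ≤ B * (2 * lorentzNorm p q f) := mul_le_mul_right hWlor _
    _ = ENNReal.ofReal (B * 2).toReal * lorentzNorm p q f := by
        rw [ENNReal.ofReal_toReal hAt, hB]; ring

end
end

section
/- Let $2 < p < \infty$ and $t > 0$, and let $h_t(x) = (4\pi t)^{-3/2} e^{-|x|^2/(4t)}$ be the heat kernel on $\mathbb{R}^3$. Then for every $f \in \dot{M}^{2,p}(\mathbb{R}^3)$ one has the estimate $t^{3/(2p)} \|h_t * f\|_{L^\infty} \le c\, \|f\|_{\dot{M}^{2,p}}$, with a constant $c>0$ independent of $t$ and $f$. -/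
open MeasureTheory ENNReal Real

noncomputable section

/-- The heat kernel `h_t(x) = (4πt)^{-3/2} e^{-|x|²/(4t)}` on `ℝ³`. -/
noncomputable def heatKernel (t : ℝ) (x : E3) : ℝ :=
  (4 * Real.pi * t) ^ (-(3 : ℝ) / 2) * Real.exp (-‖x‖ ^ 2 / (4 * t))

/-! ### Auxiliary lemmas -/

section Aux
open Metric

lemma hkm_term_le (k : ℕ) : Real.exp (-(4^k/16)) * 8^k ≤ 110592 * (1/8:ℝ)^k := by
  have h0 : (0:ℝ) ≤ (4:ℝ)^k/48 := by positivity
  have h1 : Real.exp ((4:ℝ)^k/16) = (Real.exp ((4:ℝ)^k/48))^3 := by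
    rw [← Real.exp_nat_mul]; ring_nf
  have h2 : (4:ℝ)^k/48 ≤ Real.exp ((4:ℝ)^k/48) := (Real.add_one_le_exp _).trans' (by linarith)
  have h3 : ((4:ℝ)^k/48)^3 ≤ Real.exp ((4:ℝ)^k/16) := by
    rw [h1]; exact pow_le_pow_left₀ h0 h2 3
  have h4 : ((4:ℝ)^k/48)^3 = 64^k / 110592 := by
    rw [div_pow, ← pow_mul, pow_mul']; norm_num
  rw [h4] at h3
  have h64 : (0:ℝ) < 64^k := by positivity
  have h5 : (Real.exp ((4:ℝ)^k/16))⁻¹ ≤ (64^k / 110592:ℝ)⁻¹ :=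
    inv_anti₀ (by positivity) h3
  rw [Real.exp_neg]
  calc (Real.exp ((4:ℝ)^k/16))⁻¹ * 8^k ≤ (64^k / 110592:ℝ)⁻¹ * 8^k :=
        mul_le_mul_of_nonneg_right h5 (by positivity)
    _ = 110592 * (1/8:ℝ)^k := by
        rw [inv_div, div_mul_eq_mul_div, mul_div_assoc, ← div_pow]
        norm_num

lemma hkm_summable : Summable (fun k : ℕ => Real.exp (-(4^k/16)) * 8^k) :=
  Summable.of_nonneg_of_le (fun k => by positivity) hkm_term_le
    ((summable_geometric_of_lt_one (by norm_num) (by norm_num)).mul_left _)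

lemma hkm_image (x : E3) (R : ℝ) : (fun y => x - y) '' ball 0 R = ball x R := by
  ext z
  simp only [Set.mem_image, mem_ball, dist_eq_norm, sub_zero]
  constructor
  · rintro ⟨y, hy, rfl⟩; simpa [norm_sub_rev] using hy
  · intro h; exact ⟨x - z, by simpa [norm_sub_rev] using h, by abel⟩

lemma hkm_trans (f : E3 → ℝ) (x : E3) (R : ℝ) :
    ∫⁻ y in ball (0:E3) R, (‖f (x - y)‖₊ : ℝ≥0∞) ^ (2:ℝ)
      = ∫⁻ z in ball x R, (‖f z‖₊ : ℝ≥0∞) ^ (2:ℝ) := by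
  have h := (Measure.measurePreserving_sub_left volume x).setLIntegral_comp_emb
    (MeasurableEquiv.subLeft x).measurableEmbedding
    (fun z => (‖f z‖₊ : ℝ≥0∞) ^ (2:ℝ)) (ball 0 R)
  rw [h, hkm_image]

lemma hkm_vball (x : E3) {R : ℝ} (hR : 0 < R) :
    volume (ball x R) = ENNReal.ofReal (R ^ (3:ℝ)) * volume (ball (0:E3) 1) := by
  rw [Measure.addHaar_ball volume x hR.le]
  have h3 : Module.finrank ℝ E3 = 3 := by simp
  rw [h3, ← Real.rpow_natCast R 3]
  norm_num

lemma hkm_ball_bound (p : ℝ) (f : E3 → ℝ) (hf : AEStronglyMeasurable f volume)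
    (x : E3) {R : ℝ} (hR : 0 < R) :
    ∫⁻ y in ball (0:E3) R, (‖f (x - y)‖₊ : ℝ≥0∞)
      ≤ (morreyNorm 2 p f / ENNReal.ofReal (R ^ (3/p))) * volume (ball x R) := by
  set M := morreyNorm 2 p f with hMdef
  set A := ∫⁻ z in ball x R, (‖f z‖₊ : ℝ≥0∞) ^ (2:ℝ) with hA
  set V := volume (ball x R) with hV
  set c₀ := ENNReal.ofReal (R ^ (3/p)) with hc
  have hV0 : V ≠ 0 := (measure_ball_pos volume x hR).ne'
  have hVt : V ≠ ∞ := measure_ball_lt_top.ne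
  have hc0 : c₀ ≠ 0 := by
    simp [hc, ENNReal.ofReal_eq_zero, not_le, Real.rpow_pos_of_pos hR]
  have hct : c₀ ≠ ∞ := ENNReal.ofReal_ne_top
  have hm : c₀ * (A / V) ^ ((1:ℝ)/2) ≤ M := by
    rw [hMdef, morreyNorm]
    exact le_iSup_of_le x (le_iSup_of_le R (le_iSup_of_le hR le_rfl))
  have hgm : AEMeasurable (fun y => (‖f (x - y)‖₊ : ℝ≥0∞)) (volume.restrict (ball (0:E3) R)) :=
    ((hf.comp_quasiMeasurePreserving
      (Measure.measurePreserving_sub_left volume x).quasiMeasurePreserving).enorm).restrict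
  have hCS : ∫⁻ y in ball (0:E3) R, (‖f (x - y)‖₊ : ℝ≥0∞)
      ≤ A ^ ((1:ℝ)/2) * V ^ ((1:ℝ)/2) := by
    have conj : Real.HolderConjugate 2 2 := Real.HolderConjugate.two_two
    have h := ENNReal.lintegral_mul_le_Lp_mul_Lq (volume.restrict (ball (0:E3) R)) conj
      hgm aemeasurable_const (g := fun _ => (1:ℝ≥0∞))
    simp only [Pi.mul_apply, mul_one, ENNReal.one_rpow, lintegral_one,
      Measure.restrict_apply_univ] at h
    rw [hkm_trans] at h
    have hVeq : volume (ball (0:E3) R) = V := by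
      rw [hV, hkm_vball x hR, hkm_vball 0 hR]
    rw [hVeq] at h
    exact h
  have hAhalf : A ^ ((1:ℝ)/2) ≤ (M / c₀) * V ^ ((1:ℝ)/2) := by
    have hAV : A ^ ((1:ℝ)/2) = (A/V) ^ ((1:ℝ)/2) * V ^ ((1:ℝ)/2) := by
      rw [← ENNReal.mul_rpow_of_nonneg _ _ (by norm_num : (0:ℝ) ≤ 1/2),
        ENNReal.div_mul_cancel hV0 hVt]
    have h2 : (A/V) ^ ((1:ℝ)/2) ≤ M / c₀ := by
      rw [ENNReal.le_div_iff_mul_le (Or.inl hc0) (Or.inl hct), mul_comm]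
      exact hm
    rw [hAV]
    exact mul_le_mul_left h2 _
  calc ∫⁻ y in ball (0:E3) R, (‖f (x - y)‖₊ : ℝ≥0∞)
      ≤ A ^ ((1:ℝ)/2) * V ^ ((1:ℝ)/2) := hCS
    _ ≤ (M / c₀) * V ^ ((1:ℝ)/2) * V ^ ((1:ℝ)/2) := mul_le_mul_left hAhalf _
    _ = (M / c₀) * V := by
        rw [mul_assoc, ← ENNReal.rpow_add _ _ hV0 hVt]
        norm_num

lemma hkm_real (p t : ℝ) (hp2 : 2 < p) (ht : 0 < t) (k : ℕ) :
    ((4*Real.pi*t) ^ (-(3:ℝ)/2) * Real.exp (1/4) * Real.exp (-(4^k/16)))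
        * ((2^k * Real.sqrt t) ^ (3:ℝ) / (2^k * Real.sqrt t) ^ ((3:ℝ)/p))
      ≤ ((4*Real.pi) ^ (-(3:ℝ)/2) * Real.exp (1/4) * t ^ (-(3/(2*p))))
        * (Real.exp (-(4^k/16)) * 8^k) := by
  have hp0 : 0 < p := by linarith
  have hs : 0 < Real.sqrt t := Real.sqrt_pos.mpr ht
  have hR : 0 < (2:ℝ)^k * Real.sqrt t := by positivity
  have h4pi : (0:ℝ) < 4 * Real.pi := by positivity
  have e1 : ((2:ℝ)^k * Real.sqrt t) ^ (3:ℝ) / (2^k * Real.sqrt t) ^ ((3:ℝ)/p)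
      = (2^k * Real.sqrt t) ^ ((3:ℝ) - 3/p) := (Real.rpow_sub hR 3 (3/p)).symm
  have e2 : ((2:ℝ)^k * Real.sqrt t) ^ ((3:ℝ) - 3/p)
      = ((2:ℝ)^k) ^ ((3:ℝ) - 3/p) * (Real.sqrt t) ^ ((3:ℝ) - 3/p) :=
    Real.mul_rpow (by positivity) hs.le
  have e3 : (Real.sqrt t) ^ ((3:ℝ) - 3/p) = t ^ (((3:ℝ) - 3/p)/2) := by
    rw [Real.sqrt_eq_rpow, ← Real.rpow_mul ht.le]
    ring_nf
  have e4 : (4*Real.pi*t) ^ (-(3:ℝ)/2) = (4*Real.pi) ^ (-(3:ℝ)/2) * t ^ (-(3:ℝ)/2) :=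
    Real.mul_rpow h4pi.le ht.le
  have e5 : t ^ (-(3:ℝ)/2) * t ^ (((3:ℝ) - 3/p)/2) = t ^ (-(3/(2*p))) := by
    rw [← Real.rpow_add ht]
    congr 1
    field_simp
    ring
  have e6 : ((2:ℝ)^k) ^ ((3:ℝ) - 3/p) ≤ 8^k := by
    have h1 : ((2:ℝ)^k) ^ ((3:ℝ) - 3/p) ≤ ((2:ℝ)^k) ^ (3:ℝ) :=
      Real.rpow_le_rpow_of_exponent_le (one_le_pow₀ one_le_two) (by
        have : 0 < 3/p := by positivity
        linarith)
    have h2 : ((2:ℝ)^k) ^ (3:ℝ) = 8^k := by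
      rw [← Real.rpow_natCast (2:ℝ) k, ← Real.rpow_mul (by norm_num), mul_comm,
        Real.rpow_mul (by norm_num), Real.rpow_natCast]
      norm_num
    linarith
  rw [e1, e2, e3, e4]
  have key : (4*Real.pi) ^ (-(3:ℝ)/2) * t ^ (-(3:ℝ)/2) * Real.exp (1/4) * Real.exp (-(4^k/16))
      * (((2:ℝ)^k) ^ ((3:ℝ) - 3/p) * t ^ (((3:ℝ) - 3/p)/2))
      = ((4*Real.pi) ^ (-(3:ℝ)/2) * Real.exp (1/4) * t ^ (-(3/(2*p))))
        * (Real.exp (-(4^k/16)) * ((2:ℝ)^k) ^ ((3:ℝ) - 3/p)) := by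
    rw [← e5]; ring
  calc (4*Real.pi) ^ (-(3:ℝ)/2) * t ^ (-(3:ℝ)/2) * Real.exp (1/4) * Real.exp (-(4^k/16))
      * (((2:ℝ)^k) ^ ((3:ℝ) - 3/p) * t ^ (((3:ℝ) - 3/p)/2))
      = ((4*Real.pi) ^ (-(3:ℝ)/2) * Real.exp (1/4) * t ^ (-(3/(2*p))))
        * (Real.exp (-(4^k/16)) * ((2:ℝ)^k) ^ ((3:ℝ) - 3/p)) := key
    _ ≤ _ := by
        apply mul_le_mul_of_nonneg_left _ (by positivity)
        apply mul_le_mul_of_nonneg_left e6 (by positivity)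

/-- The annuli decomposing `ℝ³`. -/
def Srg (t : ℝ) (k : ℕ) : Set E3 :=
  if k = 0 then ball 0 (Real.sqrt t)
  else ball (0:E3) (2^k * Real.sqrt t) \ ball 0 (2^(k-1) * Real.sqrt t)

lemma Srg_meas (t : ℝ) (k : ℕ) : MeasurableSet (Srg t k) := by
  unfold Srg; split
  · exact measurableSet_ball
  · exact measurableSet_ball.diff measurableSet_ball

lemma Srg_subset (t : ℝ) (k : ℕ) : Srg t k ⊆ ball 0 (2^k * Real.sqrt t) := by
  unfold Srg; split
  · rename_i h; subst h; simp
  · exact Set.diff_subset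

lemma Srg_union {t : ℝ} (ht : 0 < t) : (⋃ k, Srg t k) = Set.univ := by
  have hs : 0 < Real.sqrt t := Real.sqrt_pos.mpr ht
  ext y
  simp only [Set.mem_iUnion, Set.mem_univ, iff_true]
  have hex : ∃ k : ℕ, ‖y‖ < 2^k * Real.sqrt t := by
    obtain ⟨k, hk⟩ := pow_unbounded_of_one_lt (‖y‖ / Real.sqrt t) (one_lt_two (α := ℝ))
    exact ⟨k, by rwa [div_lt_iff₀ hs] at hk⟩
  classical
  refine ⟨Nat.find hex, ?_⟩
  have hfind := Nat.find_spec hex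
  unfold Srg
  rcases Nat.eq_zero_or_pos (Nat.find hex) with h0 | hpos
  · rw [h0]; simp only [if_pos rfl]
    rw [h0] at hfind; simpa [mem_ball, dist_eq_norm] using hfind
  · rw [if_neg hpos.ne']
    refine ⟨by simpa [mem_ball, dist_eq_norm] using hfind, ?_⟩
    have hmin := Nat.find_min hex (Nat.sub_lt hpos one_pos)
    simp only [mem_ball, dist_eq_norm, sub_zero, not_lt] at hmin ⊢
    exact hmin

lemma heatKernel_nonneg {t : ℝ} (ht : 0 < t) (y : E3) : 0 ≤ heatKernel t y := by
  unfold heatKernel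
  have : (0:ℝ) < 4 * Real.pi * t := by positivity
  positivity

lemma heatKernel_bound {t : ℝ} (ht : 0 < t) (k : ℕ) {y : E3} (hy : y ∈ Srg t k) :
    heatKernel t y ≤ (4*Real.pi*t) ^ (-(3:ℝ)/2) * Real.exp (1/4) * Real.exp (-(4^k/16)) := by
  have hs : 0 < Real.sqrt t := Real.sqrt_pos.mpr ht
  unfold heatKernel
  rw [show (4*Real.pi*t) ^ (-(3:ℝ)/2) * Real.exp (1/4) * Real.exp (-(4^k/16))
    = (4*Real.pi*t) ^ (-(3:ℝ)/2) * Real.exp (1/4 + -(4^k/16)) from by rw [Real.exp_add]; ring]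
  have hb : (0:ℝ) < 4 * Real.pi * t := by positivity
  apply mul_le_mul_of_nonneg_left _ (Real.rpow_nonneg hb.le _)
  apply Real.exp_le_exp.mpr
  rw [neg_div]
  have hexp : -(‖y‖^2/(4*t)) ≤ -((4:ℝ)^k/16) + 1/4 := by
    unfold Srg at hy
    rcases Nat.eq_zero_or_pos k with h0 | hpos
    · subst h0
      have : 0 ≤ ‖y‖^2/(4*t) := by positivity
      norm_num
      linarith
    · rw [if_neg hpos.ne'] at hy
      have hylb : 2^(k-1) * Real.sqrt t ≤ ‖y‖ := by
        have := hy.2; simp only [mem_ball, dist_eq_norm, sub_zero, not_lt] at this; exact this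
      have hsq : ((2:ℝ)^(k-1) * Real.sqrt t)^2 ≤ ‖y‖^2 := by
        apply pow_le_pow_left₀ (by positivity) hylb
      have hsqeq : ((2:ℝ)^(k-1) * Real.sqrt t)^2 = 4^(k-1) * t := by
        rw [mul_pow, Real.sq_sqrt ht.le, ← pow_mul, pow_mul']
        norm_num
      have h4k : (4:ℝ)^(k-1) = 4^k / 4 := by
        rw [_root_.eq_div_iff (by norm_num : (4:ℝ) ≠ 0), ← pow_succ, Nat.sub_add_cancel hpos]
      have hfrac : (4:ℝ)^k/16 ≤ ‖y‖^2/(4*t) := by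
        rw [div_le_div_iff₀ (by norm_num) (by positivity)]
        nlinarith [hsqeq ▸ hsq, h4k]
      linarith
  linarith

end Aux

open Metric in
/-- `t^{3/(2p)} ‖h_t ∗ f‖_{L^∞} ≤ c ‖f‖_{Ṁ^{2,p}}`, with `c` independent
of `t > 0` and `f`. -/
theorem heat_kernel_morrey_Linfty (p : ℝ) (hp2 : 2 < p) :
    ∃ c : ℝ, 0 < c ∧ ∀ (t : ℝ), 0 < t → ∀ f : E3 → ℝ,
      AEStronglyMeasurable f volume → morreyNorm 2 p f < ∞ →
      ENNReal.ofReal (t ^ (3 / (2 * p))) *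
          eLpNorm (fun x => ∫ y, heatKernel t y * f (x - y)) ∞ volume ≤
        ENNReal.ofReal c * morreyNorm 2 p f := by
  classical
  -- the series constant
  set S : ℝ≥0∞ := ∑' k : ℕ, ENNReal.ofReal (Real.exp (-(4^k/16)) * 8^k) with hSdef
  have hSfin : S ≠ ∞ := by
    rw [hSdef, ← ENNReal.ofReal_tsum_of_nonneg (fun k => by positivity) hkm_summable]
    exact ENNReal.ofReal_ne_top
  set V₁ : ℝ≥0∞ := volume (ball (0:E3) 1) with hV₁
  have hV₁fin : V₁ ≠ ∞ := measure_ball_lt_top.ne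
  set K : ℝ≥0∞ := ENNReal.ofReal ((4*Real.pi) ^ (-(3:ℝ)/2) * Real.exp (1/4)) * V₁ * S with hK
  have hKfin : K ≠ ∞ := by
    rw [hK]
    exact ENNReal.mul_ne_top (ENNReal.mul_ne_top ENNReal.ofReal_ne_top hV₁fin) hSfin
  refine ⟨K.toReal + 1, by positivity, ?_⟩
  have hKle : K ≤ ENNReal.ofReal (K.toReal + 1) := by
    calc K = ENNReal.ofReal K.toReal := (ENNReal.ofReal_toReal hKfin).symm
      _ ≤ _ := ENNReal.ofReal_le_ofReal (by linarith)
  intro t ht f hf hMfin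
  set M := morreyNorm 2 p f with hMdef
  have hs : 0 < Real.sqrt t := Real.sqrt_pos.mpr ht
  -- pointwise bound
  have hpt : ∀ x : E3, (‖∫ y, heatKernel t y * f (x - y)‖₊ : ℝ≥0∞)
      ≤ ENNReal.ofReal (t ^ (-(3/(2*p)))) * (K * M) := by
    intro x
    have step0 : (‖∫ y, heatKernel t y * f (x - y)‖₊ : ℝ≥0∞)
        ≤ ∫⁻ y, ENNReal.ofReal (heatKernel t y) * (‖f (x - y)‖₊ : ℝ≥0∞) := by
      refine (enorm_integral_le_lintegral_enorm _).trans (le_of_eq ?_)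
      apply lintegral_congr
      intro y
      rw [enorm_mul, Real.enorm_eq_ofReal (heatKernel_nonneg ht y), enorm_eq_nnnorm]
    -- per-annulus bound
    have step1 : ∀ k : ℕ,
        (∫⁻ y in Srg t k, ENNReal.ofReal (heatKernel t y) * (‖f (x - y)‖₊ : ℝ≥0∞))
          ≤ (M * V₁ * ENNReal.ofReal ((4*Real.pi) ^ (-(3:ℝ)/2) * Real.exp (1/4)
              * t ^ (-(3/(2*p))))) * ENNReal.ofReal (Real.exp (-(4^k/16)) * 8^k) := by
      intro k
      set R : ℝ := 2^k * Real.sqrt t with hRdef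
      have hR : 0 < R := by positivity
      set b : ℝ := (4*Real.pi*t) ^ (-(3:ℝ)/2) * Real.exp (1/4) * Real.exp (-(4^k/16)) with hb
      have hbnn : 0 ≤ b := by
        have : (0:ℝ) < 4 * Real.pi * t := by positivity
        positivity
      have s1 : (∫⁻ y in Srg t k, ENNReal.ofReal (heatKernel t y) * (‖f (x - y)‖₊ : ℝ≥0∞))
          ≤ ENNReal.ofReal b * ∫⁻ y in Srg t k, (‖f (x - y)‖₊ : ℝ≥0∞) := by
        rw [← lintegral_const_mul' _ _ ENNReal.ofReal_ne_top]
        apply setLIntegral_mono' (Srg_meas t k)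
        intro y hy
        exact mul_le_mul_left (ENNReal.ofReal_le_ofReal (heatKernel_bound ht k hy)) _
      have s2 : (∫⁻ y in Srg t k, (‖f (x - y)‖₊ : ℝ≥0∞))
          ≤ (M / ENNReal.ofReal (R ^ ((3:ℝ)/p))) * volume (ball x R) :=
        (lintegral_mono_set (Srg_subset t k)).trans (hkm_ball_bound p f hf x hR)
      have s3 : volume (ball x R) = ENNReal.ofReal (R ^ (3:ℝ)) * V₁ := hkm_vball x hR
      have hcpos : 0 < R ^ ((3:ℝ)/p) := Real.rpow_pos_of_pos hR _
      calc (∫⁻ y in Srg t k, ENNReal.ofReal (heatKernel t y) * (‖f (x - y)‖₊ : ℝ≥0∞))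
          ≤ ENNReal.ofReal b * ((M / ENNReal.ofReal (R ^ ((3:ℝ)/p)))
              * (ENNReal.ofReal (R ^ (3:ℝ)) * V₁)) := by
            refine s1.trans ?_
            exact mul_le_mul_right (s3 ▸ s2) _
        _ = M * V₁ * (ENNReal.ofReal b
              * (ENNReal.ofReal (R ^ (3:ℝ)) / ENNReal.ofReal (R ^ ((3:ℝ)/p)))) := by
            simp only [div_eq_mul_inv]; ring
        _ = M * V₁ * ENNReal.ofReal (b * (R ^ (3:ℝ) / R ^ ((3:ℝ)/p))) := by
            rw [ENNReal.ofReal_mul hbnn, ENNReal.ofReal_div_of_pos hcpos]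
        _ ≤ M * V₁ * ENNReal.ofReal (((4*Real.pi) ^ (-(3:ℝ)/2) * Real.exp (1/4)
              * t ^ (-(3/(2*p)))) * (Real.exp (-(4^k/16)) * 8^k)) := by
            apply mul_le_mul_right
            apply ENNReal.ofReal_le_ofReal
            exact hkm_real p t hp2 ht k
        _ = (M * V₁ * ENNReal.ofReal ((4*Real.pi) ^ (-(3:ℝ)/2) * Real.exp (1/4)
              * t ^ (-(3/(2*p))))) * ENNReal.ofReal (Real.exp (-(4^k/16)) * 8^k) := by
            rw [ENNReal.ofReal_mul (by
              have : (0:ℝ) < 4*Real.pi := by positivity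
              positivity)]
            ring
    calc (‖∫ y, heatKernel t y * f (x - y)‖₊ : ℝ≥0∞)
        ≤ ∫⁻ y, ENNReal.ofReal (heatKernel t y) * (‖f (x - y)‖₊ : ℝ≥0∞) := step0
      _ = ∫⁻ y in ⋃ k, Srg t k, ENNReal.ofReal (heatKernel t y) * (‖f (x - y)‖₊ : ℝ≥0∞) := by
          rw [Srg_union ht, setLIntegral_univ]
      _ ≤ ∑' k : ℕ, ∫⁻ y in Srg t k,
            ENNReal.ofReal (heatKernel t y) * (‖f (x - y)‖₊ : ℝ≥0∞) :=
          lintegral_iUnion_le _ _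
      _ ≤ ∑' k : ℕ, (M * V₁ * ENNReal.ofReal ((4*Real.pi) ^ (-(3:ℝ)/2) * Real.exp (1/4)
            * t ^ (-(3/(2*p))))) * ENNReal.ofReal (Real.exp (-(4^k/16)) * 8^k) :=
          ENNReal.tsum_le_tsum step1
      _ = (M * V₁ * ENNReal.ofReal ((4*Real.pi) ^ (-(3:ℝ)/2) * Real.exp (1/4)
            * t ^ (-(3/(2*p))))) * S := ENNReal.tsum_mul_left
      _ = ENNReal.ofReal (t ^ (-(3/(2*p)))) * (K * M) := by
          rw [hK, ENNReal.ofReal_mul (by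
            have : (0:ℝ) < 4*Real.pi := by positivity
            positivity)]
          ring
  -- essSup bound
  have hsup : eLpNorm (fun x => ∫ y, heatKernel t y * f (x - y)) ∞ volume
      ≤ ENNReal.ofReal (t ^ (-(3/(2*p)))) * (K * M) := by
    rw [eLpNorm_exponent_top, eLpNormEssSup]
    exact essSup_le_of_ae_le _ (Filter.Eventually.of_forall hpt)
  calc ENNReal.ofReal (t ^ (3 / (2 * p))) *
        eLpNorm (fun x => ∫ y, heatKernel t y * f (x - y)) ∞ volume
      ≤ ENNReal.ofReal (t ^ (3 / (2 * p))) *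
        (ENNReal.ofReal (t ^ (-(3/(2*p)))) * (K * M)) := mul_le_mul_right hsup _
    _ = (ENNReal.ofReal (t ^ (3 / (2 * p)) * t ^ (-(3/(2*p))))) * (K * M) := by
        rw [ENNReal.ofReal_mul (Real.rpow_nonneg ht.le _)]
        ring
    _ = K * M := by
        rw [← Real.rpow_add ht]
        norm_num
    _ ≤ ENNReal.ofReal (K.toReal + 1) * M := mul_le_mul_left hKle _

end
end
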